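/- arXiv:2101.11763 — 5 statements merged into one kernel-verified Lean document; each statement's English description precedes it below -/
import Mathlib

section
/- Let μ > 0 and let (s_n, s_t) ∈ ℝ × ℝ² with s_t ≠ 0. Define λ₁ = -μ s_n - ‖s_t‖, λ₂ = -s_n + μ‖s_t‖, ξ₁ = -(1/(1+μ²))·(μ, s_t/‖s_t‖), ξ₂ = (1/(1+μ²))·(-1, μ s_t/‖s_t‖). Then the Euclidean projection of (s_n, s_t) onto the friction cone F = {(r_n, r_t) : -μ r_n ≥ ‖r_t‖} equals max{0, λ₁}·ξ₁ + max{0, λ₂}·ξ₂. -/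
/-
Write `s = (s_n, ‖s_t‖ u)` with `‖u‖ = 1`. In the plane spanned by `(1, 0)` and `(0, u)`, `ξ₂`
spans an edge of the friction cone `F` and `ξ₁` an edge of `F*`, which lies in the dual cone of
`F`; moreover `ξ₁ ⟂ ξ₂` and `s = λ₁ ξ₁ + λ₂ ξ₂`. Hence in each of the cases `λ₁ ≥ 0` (where
`y = s`), `λ₂ ≤ 0` (where `y = 0`) and `λ₁ < 0 < λ₂` (where `y = λ₂ ξ₂`), the claimed point `y`
satisfies `y ∈ F`, `y - s ∈ F*` and `⟪s - y, y⟫ = 0`. By Moreau's criterion `y` is then the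
projection, which is unique since `F` is convex.
-/

open scoped RealInnerProductSpace Pointwise Classical Matrix

noncomputable section

abbrev E2 := EuclideanSpace ℝ (Fin 2)

abbrev V := WithLp 2 (ℝ × E2)

/-- The Coulomb friction cone `F = {(r_n, r_t) : -μ r_n ≥ ‖r_t‖}`. -/
def frictionCone (μ : ℝ) : Set V := {r | ‖r.ofLp.2‖ ≤ -μ * r.ofLp.1}

/-- `F* = {(v_n, v_t) : -v_n ≥ μ ‖v_t‖}`. -/
def frictionDual (μ : ℝ) : Set V := {v | μ * ‖v.ofLp.2‖ ≤ -v.ofLp.1}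

/-- The dual cone of a set in a real inner product space. -/
def dualCone {H : Type*} [NormedAddCommGroup H] [InnerProductSpace ℝ H]
    (C : Set H) : Set H := {s | ∀ x ∈ C, 0 ≤ ⟪s, x⟫}

/-- Pair constructor for `V`. -/
def pr (a : ℝ) (b : E2) : V := WithLp.toLp 2 (a, b)

/-- `y` is the metric projection of `x` onto `S`. -/
def IsProjOn {H : Type*} [NormedAddCommGroup H] [InnerProductSpace ℝ H]
    (S : Set H) (x y : H) : Prop := y ∈ S ∧ ∀ z ∈ S, ‖x - y‖ ≤ ‖x - z‖

section Projection

variable {H : Type*} [NormedAddCommGroup H] [InnerProductSpace ℝ H] {K : Set H} {x y y' : H}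

theorem isProjOn_self (hx : x ∈ K) : IsProjOn K x x :=
  ⟨hx, fun z _ => by simp⟩

theorem isProjOn_of_inner_le_zero (hy : y ∈ K) (h : ∀ z ∈ K, ⟪x - y, z - y⟫ ≤ 0) :
    IsProjOn K x y := by
  refine ⟨hy, fun z hz => (sq_le_sq₀ (norm_nonneg _) (norm_nonneg _)).mp ?_⟩
  have hexp : ‖x - z‖ ^ 2 = ‖x - y‖ ^ 2 - 2 * ⟪x - y, z - y⟫ + ‖z - y‖ ^ 2 := by
    rw [← norm_sub_sq_real, sub_sub_sub_cancel_right]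
  nlinarith [h z hz, sq_nonneg ‖z - y‖]

theorem IsProjOn.inner_le_zero (hK : Convex ℝ K) (h : IsProjOn K x y) :
    ∀ z ∈ K, ⟪x - y, z - y⟫ ≤ 0 := by
  have : Nonempty K := ⟨⟨y, h.1⟩⟩
  have hbdd : BddBelow (Set.range fun w : K => ‖x - w‖) := ⟨0, by rintro _ ⟨w, rfl⟩; positivity⟩
  refine (norm_eq_iInf_iff_real_inner_le_zero hK h.1).mp (le_antisymm ?_ ?_)
  · exact le_ciInf fun w => h.2 w w.2
  · exact ciInf_le hbdd ⟨y, h.1⟩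

theorem IsProjOn.eq (hK : Convex ℝ K) (h : IsProjOn K x y) (h' : IsProjOn K x y') : y = y' := by
  have hle := add_nonpos (h.inner_le_zero hK y' h'.1) (h'.inner_le_zero hK y h.1)
  have hsq : ⟪y - y', y - y'⟫ = ⟪x - y, y' - y⟫ + ⟪x - y', y - y'⟫ := by
    simp only [inner_sub_left, inner_sub_right, real_inner_comm]; ring
  rw [← sub_eq_zero, ← inner_self_eq_zero (𝕜 := ℝ)]
  exact le_antisymm (hsq ▸ hle) real_inner_self_nonneg

theorem IsProjOn.iff_eq (hK : Convex ℝ K) (h : IsProjOn K x y) :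
    IsProjOn K x y' ↔ y' = y :=
  ⟨fun h' => h'.eq hK h, fun e => e ▸ h⟩

theorem isProjOn_of_sub_mem_dualCone (hy : y ∈ K) (hyx : y - x ∈ dualCone K)
    (horth : ⟪x - y, y⟫ = 0) : IsProjOn K x y := by
  refine isProjOn_of_inner_le_zero hy fun z hz => ?_
  have := hyx z hz
  rw [inner_sub_right, horth, ← neg_sub y x, inner_neg_left]
  linarith

end Projection

theorem WithLp.real_prod_inner_apply {F : Type*} [NormedAddCommGroup F] [InnerProductSpace ℝ F]
    (x y : WithLp 2 (ℝ × F)) : ⟪x, y⟫ = x.ofLp.1 * y.ofLp.1 + ⟪x.ofLp.2, y.ofLp.2⟫ := by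
  rw [WithLp.prod_inner_apply, RCLike.inner_apply', conj_trivial]

section FrictionCone

variable {μ : ℝ} {u : E2}

theorem convex_frictionCone : Convex ℝ (frictionCone μ) := by
  intro x hx z hz a b ha hb hab
  change ‖x.ofLp.2‖ ≤ -μ * x.ofLp.1 at hx
  change ‖z.ofLp.2‖ ≤ -μ * z.ofLp.1 at hz
  change ‖a • x.ofLp.2 + b • z.ofLp.2‖ ≤ -μ * (a * x.ofLp.1 + b * z.ofLp.1)
  calc ‖a • x.ofLp.2 + b • z.ofLp.2‖ ≤ a * ‖x.ofLp.2‖ + b * ‖z.ofLp.2‖ := by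
        refine (norm_add_le _ _).trans_eq ?_
        rw [norm_smul_of_nonneg ha, norm_smul_of_nonneg hb]
    _ ≤ -μ * (a * x.ofLp.1 + b * z.ofLp.1) := by nlinarith

theorem smul_mem_frictionCone {c : ℝ} (hc : 0 ≤ c) {r : V} (hr : r ∈ frictionCone μ) :
    c • r ∈ frictionCone μ := by
  change ‖c • r.ofLp.2‖ ≤ -μ * (c * r.ofLp.1)
  rw [norm_smul_of_nonneg hc]
  nlinarith [hr.out]

theorem smul_mem_frictionDual {c : ℝ} (hc : 0 ≤ c) {v : V} (hv : v ∈ frictionDual μ) :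
    c • v ∈ frictionDual μ := by
  change μ * ‖c • v.ofLp.2‖ ≤ -(c * v.ofLp.1)
  rw [norm_smul_of_nonneg hc]
  nlinarith [hv.out]

theorem frictionDual_subset_dualCone (hμ : 0 < μ) :
    frictionDual μ ⊆ dualCone (frictionCone μ) := by
  intro v hv z hz
  change μ * ‖v.ofLp.2‖ ≤ -v.ofLp.1 at hv
  change ‖z.ofLp.2‖ ≤ -μ * z.ofLp.1 at hz
  have hzn : 0 ≤ -z.ofLp.1 := by nlinarith [norm_nonneg z.ofLp.2]
  have hinner : -(‖v.ofLp.2‖ * ‖z.ofLp.2‖) ≤ ⟪v.ofLp.2, z.ofLp.2⟫ :=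
    neg_le_of_abs_le (abs_real_inner_le_norm _ _)
  have hvz : ‖v.ofLp.2‖ * ‖z.ofLp.2‖ ≤ v.ofLp.1 * z.ofLp.1 := calc
    ‖v.ofLp.2‖ * ‖z.ofLp.2‖ ≤ ‖v.ofLp.2‖ * (-μ * z.ofLp.1) := by gcongr
    _ = μ * ‖v.ofLp.2‖ * -z.ofLp.1 := by ring
    _ ≤ -v.ofLp.1 * -z.ofLp.1 := by gcongr
    _ = v.ofLp.1 * z.ofLp.1 := by ring
  rw [WithLp.real_prod_inner_apply]
  linarith

-- `dualEdge μ u` and `coneEdge μ u` are the `ξ₁` and `ξ₂` of the statement,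
-- for `u = s_t / ‖s_t‖`.
def dualEdge (μ : ℝ) (u : E2) : V := -(1 / (1 + μ ^ 2)) • (WithLp.toLp 2 (μ, u) : V)

def coneEdge (μ : ℝ) (u : E2) : V := (1 / (1 + μ ^ 2)) • (WithLp.toLp 2 (-1, μ • u) : V)

theorem coneEdge_mem_frictionCone (hμ : 0 ≤ μ) (hu : ‖u‖ = 1) : coneEdge μ u ∈ frictionCone μ := by
  change ‖(1 / (1 + μ ^ 2)) • μ • u‖ ≤ -μ * (1 / (1 + μ ^ 2) * -1)
  rw [norm_smul_of_nonneg (by positivity), norm_smul_of_nonneg hμ, hu]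
  exact le_of_eq (by ring)

theorem dualEdge_mem_frictionDual (hu : ‖u‖ = 1) : dualEdge μ u ∈ frictionDual μ := by
  change μ * ‖-(1 / (1 + μ ^ 2)) • u‖ ≤ -(-(1 / (1 + μ ^ 2)) * μ)
  rw [norm_smul, norm_neg, Real.norm_of_nonneg (by positivity), hu]
  exact le_of_eq (by ring)

theorem inner_dualEdge_coneEdge (hu : ‖u‖ = 1) : ⟪dualEdge μ u, coneEdge μ u⟫ = 0 := by
  simp only [dualEdge, coneEdge, inner_smul_left, inner_smul_right, WithLp.real_prod_inner_apply,
    real_inner_self_eq_norm_sq, hu, conj_trivial]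
  ring

theorem smul_dualEdge_add_smul_coneEdge (a r : ℝ) (u : E2) :
    (-μ * a - r) • dualEdge μ u + (-a + μ * r) • coneEdge μ u = WithLp.toLp 2 (a, r • u) := by
  have hc : 1 + μ ^ 2 ≠ 0 := by positivity
  apply WithLp.ofLp_injective
  simp only [dualEdge, coneEdge, WithLp.ofLp_add, WithLp.ofLp_smul, Prod.smul_mk, Prod.mk_add_mk,
    smul_eq_mul, smul_smul, ← add_smul]
  congr 1
  · field_simp; ring
  · congr 1; field_simp; ring

theorem isProjOn_max_smul_dualEdge_add_max_smul_coneEdge (hμ : 0 < μ) {s : V}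
    (hst : s.ofLp.2 ≠ 0) :
    IsProjOn (frictionCone μ) s
      (max 0 (-μ * s.ofLp.1 - ‖s.ofLp.2‖) • dualEdge μ (‖s.ofLp.2‖⁻¹ • s.ofLp.2) +
        max 0 (-s.ofLp.1 + μ * ‖s.ofLp.2‖) • coneEdge μ (‖s.ofLp.2‖⁻¹ • s.ofLp.2)) := by
  set u : E2 := ‖s.ofLp.2‖⁻¹ • s.ofLp.2
  set lam1 := -μ * s.ofLp.1 - ‖s.ofLp.2‖
  set lam2 := -s.ofLp.1 + μ * ‖s.ofLp.2‖
  have hu : ‖u‖ = 1 := norm_smul_inv_norm hst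
  have hs : lam1 • dualEdge μ u + lam2 • coneEdge μ u = s := by
    rw [smul_dualEdge_add_smul_coneEdge, smul_inv_smul₀ (norm_ne_zero_iff.mpr hst)]
  rcases le_total 0 lam1 with h1 | h1
  · have h2 : 0 ≤ lam2 := by
      have hs1 : μ * s.ofLp.1 ≤ 0 := by linarith [norm_nonneg s.ofLp.2]
      have := nonpos_of_mul_nonpos_right hs1 hμ
      have := mul_nonneg hμ.le (norm_nonneg s.ofLp.2)
      linarith
    rw [max_eq_right h1, max_eq_right h2, hs]
    exact isProjOn_self (show ‖s.ofLp.2‖ ≤ -μ * s.ofLp.1 by linarith)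
  rw [max_eq_left h1]
  rcases le_total lam2 0 with h2 | h2
  · rw [max_eq_left h2, zero_smul, zero_smul, add_zero]
    refine isProjOn_of_sub_mem_dualCone (by simp [frictionCone]) ?_ (by simp)
    rw [zero_sub]
    refine frictionDual_subset_dualCone hμ ?_
    change μ * ‖-s.ofLp.2‖ ≤ - -s.ofLp.1
    rw [norm_neg]
    linarith
  rw [max_eq_right h2, zero_smul, zero_add]
  have hres : s - lam2 • coneEdge μ u = lam1 • dualEdge μ u := by rw [← hs]; abel
  refine isProjOn_of_sub_mem_dualCone
    (smul_mem_frictionCone h2 (coneEdge_mem_frictionCone hμ.le hu)) ?_ ?_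
  · rw [← neg_sub, hres, ← neg_smul]
    exact frictionDual_subset_dualCone hμ
      (smul_mem_frictionDual (neg_nonneg.mpr h1) (dualEdge_mem_frictionDual hu))
  · rw [hres, inner_smul_left, inner_smul_right, inner_dualEdge_coneEdge hu]
    simp

end FrictionCone

theorem proj_frictionCone_formula (μ : ℝ) (hμ : 0 < μ) (s : V) (hst : s.ofLp.2 ≠ 0) :
    let lam1 : ℝ := -μ * s.ofLp.1 - ‖s.ofLp.2‖
    let lam2 : ℝ := -s.ofLp.1 + μ * ‖s.ofLp.2‖
    let xi1 : V := -(1 / (1 + μ ^ 2)) • (WithLp.toLp 2 (μ, ‖s.ofLp.2‖⁻¹ • s.ofLp.2) : V)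
    let xi2 : V := (1 / (1 + μ ^ 2)) • (WithLp.toLp 2 (-1, μ • (‖s.ofLp.2‖⁻¹ • s.ofLp.2)) : V)
    ∀ y : V, IsProjOn (frictionCone μ) s y ↔
      y = max 0 lam1 • xi1 + max 0 lam2 • xi2 := by
  intro lam1 lam2 xi1 xi2 y
  exact (isProjOn_max_smul_dualEdge_add_max_smul_coneEdge hμ hst).iff_eq convex_frictionCone
end
end

section
/- Let μ > 0 and (s_n, s_t) ∈ ℝ × ℝ² with s_t ≠ 0, -μ s_n < ‖s_t‖, and -s_n + μ‖s_t‖ > 0. Then Π_F(s_n, s_t) = (λ₂/(1+μ²))·(-1, μ s_t/‖s_t‖) where λ₂ = -s_n + μ‖s_t‖, and this point lies on the boundary of F, i.e. satisfies -μ r_n = ‖r_t‖. -/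
open scoped RealInnerProductSpace Pointwise Classical Matrix

noncomputable section

/-! Write `s_t = ‖s_t‖ • u` with `‖u‖ = 1`. The plane spanned by `(-1, μ u)` and `(μ, u)` contains `s`,
and these two vectors are orthogonal: the first spans the boundary ray of `F` in direction `u`, the
second is a normal of `F` along that ray, and `F` lies in the half-space `⟪(μ, u), ·⟫ ≤ 0`.
Decomposing `s` in this orthogonal basis, `s - y` is a nonnegative multiple of the normal, which is the
variational inequality characterising `y = Π_F s`. -/

section Projection

variable {H : Type*} [NormedAddCommGroup H] [InnerProductSpace ℝ H]

lemma sq_norm_sub_add_sq_norm_sub_le_of_inner_nonpos {x y z : H} (h : ⟪x - y, z - y⟫ ≤ 0) :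
    ‖x - y‖ ^ 2 + ‖z - y‖ ^ 2 ≤ ‖x - z‖ ^ 2 := by
  have hxz : x - z = (x - y) - (z - y) := by abel
  rw [hxz, norm_sub_sq_real (x - y)]
  linarith

lemma isProjOn_iff_eq_of_inner_nonpos {S : Set H} {x y : H} (hy : y ∈ S)
    (h : ∀ z ∈ S, ⟪x - y, z - y⟫ ≤ 0) (z : H) : IsProjOn S x z ↔ z = y := by
  constructor
  · rintro ⟨hzS, hzmin⟩
    have hle : ‖x - z‖ ^ 2 ≤ ‖x - y‖ ^ 2 := pow_le_pow_left₀ (norm_nonneg _) (hzmin y hy) 2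
    have hzy : ‖z - y‖ ^ 2 ≤ 0 := by
      linarith [sq_norm_sub_add_sq_norm_sub_le_of_inner_nonpos (h z hzS)]
    exact norm_sub_eq_zero_iff.mp (pow_eq_zero_iff two_ne_zero |>.mp (le_antisymm hzy (sq_nonneg _)))
  · rintro rfl
    refine ⟨hy, fun w hw => ?_⟩
    have hle : ‖x - z‖ ^ 2 ≤ ‖x - w‖ ^ 2 := by
      linarith [sq_norm_sub_add_sq_norm_sub_le_of_inner_nonpos (h w hw), sq_nonneg ‖w - z‖]
    exact le_of_pow_le_pow_left₀ two_ne_zero (norm_nonneg _) hle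

end Projection

section FrictionCone

def frictionEdge (μ : ℝ) (u : E2) : V := WithLp.toLp 2 (-1, μ • u)

def frictionNormal (μ : ℝ) (u : E2) : V := WithLp.toLp 2 (μ, u)

lemma inner_toLp_pair (a b : ℝ) (v w : E2) :
    ⟪(WithLp.toLp 2 (a, v) : V), WithLp.toLp 2 (b, w)⟫ = a * b + ⟪v, w⟫ := by
  rw [WithLp.prod_inner_apply]
  simp [mul_comm]

lemma inner_frictionNormal_nonpos {μ : ℝ} {u : E2} (hu : ‖u‖ ≤ 1) {z : V}
    (hz : z ∈ frictionCone μ) : ⟪frictionNormal μ u, z⟫ ≤ 0 := by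
  have hCS : ⟪u, z.ofLp.2⟫ ≤ ‖z.ofLp.2‖ :=
    (real_inner_le_norm u z.ofLp.2).trans (mul_le_of_le_one_left (norm_nonneg _) hu)
  have hzF : ‖z.ofLp.2‖ ≤ -μ * z.ofLp.1 := hz
  rw [frictionNormal, ← WithLp.toLp_ofLp (p := 2) z, inner_toLp_pair]
  linarith

lemma inner_frictionNormal_frictionEdge (μ : ℝ) {u : E2} (hu : ‖u‖ = 1) :
    ⟪frictionNormal μ u, frictionEdge μ u⟫ = 0 := by
  rw [frictionNormal, frictionEdge, inner_toLp_pair, real_inner_smul_right, real_inner_self_eq_norm_sq,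
    hu]
  ring

lemma neg_mul_fst_eq_norm_snd_smul_frictionEdge {μ c : ℝ} (hμ : 0 ≤ μ) (hc : 0 ≤ c) {u : E2}
    (hu : ‖u‖ = 1) :
    -μ * (c • frictionEdge μ u).ofLp.1 = ‖(c • frictionEdge μ u).ofLp.2‖ := by
  simp only [frictionEdge, WithLp.ofLp_smul, Prod.smul_fst, Prod.smul_snd, smul_smul, norm_smul,
    hu, Real.norm_eq_abs, abs_of_nonneg (mul_nonneg hc hμ)]
  simp [mul_comm]

lemma toLp_eq_smul_frictionEdge_add_smul_frictionNormal (μ a t : ℝ) (u : E2) :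
    (WithLp.toLp 2 (a, t • u) : V) =
      ((-a + μ * t) / (1 + μ ^ 2)) • frictionEdge μ u
        + ((μ * a + t) / (1 + μ ^ 2)) • frictionNormal μ u := by
  have hden : 1 + μ ^ 2 ≠ 0 := by positivity
  refine (WithLp.ext_iff 2).mpr (Prod.ext ?_ ?_)
  · simp only [frictionEdge, frictionNormal, WithLp.ofLp_add, WithLp.ofLp_smul, Prod.fst_add,
      Prod.smul_fst, smul_eq_mul]
    field_simp
    ring
  · simp only [frictionEdge, frictionNormal, WithLp.ofLp_add, WithLp.ofLp_smul, Prod.snd_add,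
      Prod.smul_snd, smul_smul, ← add_smul]
    congr 1
    field_simp
    ring

end FrictionCone

theorem proj_frictionCone_boundary (μ : ℝ) (hμ : 0 < μ) (s : V) (hst : s.ofLp.2 ≠ 0)
    (h1 : -μ * s.ofLp.1 < ‖s.ofLp.2‖) (h2 : 0 < -s.ofLp.1 + μ * ‖s.ofLp.2‖) :
    let lam2 : ℝ := -s.ofLp.1 + μ * ‖s.ofLp.2‖
    let y : V := (lam2 / (1 + μ ^ 2)) • (WithLp.toLp 2 (-1, μ • (‖s.ofLp.2‖⁻¹ • s.ofLp.2)) : V)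
    (∀ z : V, IsProjOn (frictionCone μ) s z ↔ z = y) ∧ -μ * y.ofLp.1 = ‖y.ofLp.2‖ := by
  intro lam2 y
  set n : ℝ := ‖s.ofLp.2‖
  set u : E2 := n⁻¹ • s.ofLp.2
  have hn : 0 < n := norm_pos_iff.mpr hst
  have hu : ‖u‖ = 1 := by
    rw [norm_smul, norm_inv, norm_norm, inv_mul_cancel₀ hn.ne']
  have hy : y = (lam2 / (1 + μ ^ 2)) • frictionEdge μ u := rfl
  obtain ⟨d, hd, hs⟩ : ∃ d : ℝ, 0 ≤ d ∧ s = y + d • frictionNormal μ u := by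
    have hs_t : s.ofLp.2 = n • u := by rw [smul_smul, mul_inv_cancel₀ hn.ne', one_smul]
    refine ⟨(μ * s.ofLp.1 + n) / (1 + μ ^ 2), div_nonneg (by linarith) (by positivity), ?_⟩
    rw [hy, ← toLp_eq_smul_frictionEdge_add_smul_frictionNormal, ← hs_t, WithLp.toLp_ofLp]
  have hbd : -μ * y.ofLp.1 = ‖y.ofLp.2‖ :=
    neg_mul_fst_eq_norm_snd_smul_frictionEdge hμ.le (div_pos h2 (by positivity)).le hu
  refine ⟨isProjOn_iff_eq_of_inner_nonpos hbd.symm.le fun z hz => ?_, hbd⟩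
  calc ⟪s - y, z - y⟫
      = d * ⟪frictionNormal μ u, z⟫ := by
        rw [hs, add_sub_cancel_left, real_inner_smul_left, inner_sub_right, hy, real_inner_smul_right,
          inner_frictionNormal_frictionEdge μ hu, mul_zero, sub_zero]
    _ ≤ 0 := mul_nonpos_of_nonneg_of_nonpos hd (inner_frictionNormal_nonpos hu.le hz)
end
end

section
/- Let μ > 0, g ∈ ℝ, Δu_t ∈ ℝ², g-hat ∈ ℝ, r_n ∈ ℝ, r_t ∈ ℝ². The Coulomb friction conditions { -μ r_n ≥ ‖r_t‖, g-hat ≥ 0, ⟨r_t, Δu_t⟩ - r_n·(g-hat + μ‖Δu_t‖) = 0 } hold if and only if the cone complementarity condition holds: the vector (-g-hat - μ‖Δu_t‖, Δu_t) lies in F* = {(v_n,v_t) : -v_n ≥ μ‖v_t‖}, the vector (r_n, r_t) lies in F = {(r_n,r_t) : -μ r_n ≥ ‖r_t‖}, and their inner product ⟨(-g-hat - μ‖Δu_t‖, Δu_t), (r_n, r_t)⟩ = 0. -/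
open scoped RealInnerProductSpace Pointwise Classical Matrix

noncomputable section

@[simp]
theorem inner_pr (a c : ℝ) (b d : E2) : ⟪pr a b, pr c d⟫ = a * c + ⟪b, d⟫ := by
  simp [pr, WithLp.prod_inner_apply, mul_comm]

@[simp]
theorem pr_mem_frictionCone_iff (μ a : ℝ) (b : E2) :
    pr a b ∈ frictionCone μ ↔ ‖b‖ ≤ -μ * a :=
  Iff.rfl

@[simp]
theorem pr_mem_frictionDual_iff (μ a : ℝ) (b : E2) :
    pr a b ∈ frictionDual μ ↔ μ * ‖b‖ ≤ -a :=
  Iff.rfl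

theorem coulomb_iff_cone_complementarity_general (μ : ℝ)
    (ghat : ℝ) (Δut : E2) (rn : ℝ) (rt : E2) :
    (-μ * rn ≥ ‖rt‖ ∧ ghat ≥ 0 ∧ ⟪rt, Δut⟫ - rn * (ghat + μ * ‖Δut‖) = 0) ↔
      (pr (-ghat - μ * ‖Δut‖) Δut ∈ frictionDual μ ∧
        pr rn rt ∈ frictionCone μ ∧
        ⟪pr (-ghat - μ * ‖Δut‖) Δut, pr rn rt⟫ = 0) := by
  have gap_nonneg : μ * ‖Δut‖ ≤ -(-ghat - μ * ‖Δut‖) ↔ 0 ≤ ghat := by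
    constructor <;> intro h <;> linarith
  have complementarity :
      (-ghat - μ * ‖Δut‖) * rn + ⟪Δut, rt⟫ = 0 ↔ ⟪rt, Δut⟫ - rn * (ghat + μ * ‖Δut‖) = 0 := by
    rw [real_inner_comm]
    constructor <;> intro h <;> linarith
  rw [pr_mem_frictionDual_iff, pr_mem_frictionCone_iff, inner_pr, gap_nonneg, complementarity]
  tauto

theorem coulomb_iff_cone_complementarity (μ : ℝ) (hμ : 0 < μ)
    (ghat : ℝ) (Δut : E2) (rn : ℝ) (rt : E2) :
    (-μ * rn ≥ ‖rt‖ ∧ ghat ≥ 0 ∧ ⟪rt, Δut⟫ - rn * (ghat + μ * ‖Δut‖) = 0) ↔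
      (pr (-ghat - μ * ‖Δut‖) Δut ∈ frictionDual μ ∧
        pr rn rt ∈ frictionCone μ ∧
        ⟪pr (-ghat - μ * ‖Δut‖) Δut, pr rn rt⟫ = 0) :=
  coulomb_iff_cone_complementarity_general μ ghat Δut rn rt
end
end

section
/- Let μ > 0, K ∈ ℝ^{d×d} symmetric positive definite, p ∈ ℝ^d, and for j = 1,…,c let g̃_j ∈ ℝ, t_{nj} ∈ ℝ^d, T_{tj} ∈ ℝ^{d×2}. Suppose Δu ∈ ℝ^d and r_j = (r_{nj}, r_{tj}) ∈ ℝ × ℝ² for each j satisfy: (i) K Δu - p = Σ_j (t_{nj} r_{nj} + T_{tj} r_{tj}); (ii) for each j, (-g̃_j + t_{nj}ᵀΔu, T_{tj}ᵀΔu) ∈ F*, (r_{nj}, r_{tj}) ∈ F, and their inner product vanishes. Then Δu is a global minimizer of the convex function Δu ↦ (1/2)ΔuᵀKΔu - pᵀΔu + Σ_j δ_{F*}(-g̃_j + t_{nj}ᵀΔu, T_{tj}ᵀΔu). -/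
open scoped RealInnerProductSpace Pointwise Classical Matrix

noncomputable section

/-!
On the feasible set, where every indicator term vanishes, `J` is the convex quadratic
`q u = ½ uᵀKu - pᵀu`, so `Δu` minimizes it as soon as `∇q(Δu) ⬝ (u - Δu) ≥ 0`. By the
equilibrium equation this directional derivative is `∑ⱼ ⟪rⱼ, vⱼ(u) - vⱼ(Δu)⟫`, which by
complementarity equals `∑ⱼ ⟪rⱼ, vⱼ(u)⟫ ≥ 0`, because `F` lies in the dual cone of `F*`.
Off the feasible set `J u = ⊤`.
-/

theorem frictionCone_subset_dualCone_frictionDual {μ : ℝ} (hμ : 0 < μ) :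
    frictionCone μ ⊆ dualCone (frictionDual μ) := by
  intro r (hr : ‖r.ofLp.2‖ ≤ -μ * r.ofLp.1) v (hv : μ * ‖v.ofLp.2‖ ≤ -v.ofLp.1)
  have hcs : -(‖r.ofLp.2‖ * ‖v.ofLp.2‖) ≤ ⟪r.ofLp.2, v.ofLp.2⟫ :=
    neg_le_of_abs_le (abs_real_inner_le_norm _ _)
  have hprod : ‖r.ofLp.2‖ * (μ * ‖v.ofLp.2‖) ≤ (-μ * r.ofLp.1) * (-v.ofLp.1) :=
    mul_le_mul hr hv (by positivity) ((norm_nonneg _).trans hr)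
  rw [WithLp.prod_inner_apply, real_inner_eq_re_inner, RCLike.re_to_real, real_inner_comm,
    RCLike.inner_apply, conj_trivial]
  nlinarith

theorem inner_pr_pr (a a' : ℝ) (b b' : E2) : ⟪pr a b, pr a' b'⟫ = a * a' + ⟪b, b'⟫ := by
  simp [pr, WithLp.prod_inner_apply, mul_comm]

theorem inner_toLp_transpose_mulVec {n : Type*} [Fintype n] (b : E2)
    (T : Matrix n (Fin 2) ℝ) (u : n → ℝ) :
    ⟪b, WithLp.toLp 2 (Tᵀ *ᵥ u)⟫ = T *ᵥ b.ofLp ⬝ᵥ u := by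
  rw [EuclideanSpace.inner_eq_star_dotProduct, WithLp.ofLp_toLp, star_trivial,
    dotProduct_comm, Matrix.dotProduct_mulVec, Matrix.vecMul_transpose]

theorem inner_pr_affine_sub {n : Type*} [Fintype n] (a g : ℝ) (b : E2) (t : n → ℝ)
    (T : Matrix n (Fin 2) ℝ) (u x : n → ℝ) :
    ⟪pr a b, pr (-g + t ⬝ᵥ u) (WithLp.toLp 2 (Tᵀ *ᵥ u))⟫
      - ⟪pr a b, pr (-g + t ⬝ᵥ x) (WithLp.toLp 2 (Tᵀ *ᵥ x))⟫
      = (a • t + T *ᵥ b.ofLp) ⬝ᵥ (u - x) := by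
  simp only [inner_pr_pr, inner_toLp_transpose_mulVec, add_dotProduct, smul_dotProduct,
    dotProduct_sub, smul_eq_mul]
  ring

theorem quadratic_le_of_dotProduct_sub_nonneg {n : Type*} [Fintype n]
    {K : Matrix n n ℝ} (hK : K.PosSemidef) (p : n → ℝ) {x y : n → ℝ}
    (h : 0 ≤ (K *ᵥ x - p) ⬝ᵥ (y - x)) :
    1 / 2 * (K *ᵥ x ⬝ᵥ x) - p ⬝ᵥ x ≤ 1 / 2 * (K *ᵥ y ⬝ᵥ y) - p ⬝ᵥ y := by
  set w := y - x
  have hKsymm : K *ᵥ w ⬝ᵥ x = K *ᵥ x ⬝ᵥ w := by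
    rw [dotProduct_comm, Matrix.dotProduct_mulVec, ← Matrix.mulVec_transpose,
      ← Matrix.conjTranspose_eq_transpose_of_trivial, hK.isHermitian.eq]
  have hy : y = x + w := by simp [w]
  have hw : 0 ≤ K *ᵥ w ⬝ᵥ w := by simpa [dotProduct_comm] using hK.dotProduct_mulVec_nonneg w
  rw [hy, Matrix.mulVec_add, add_dotProduct, dotProduct_add, dotProduct_add, dotProduct_add,
    hKsymm]
  rw [sub_dotProduct] at h
  linarith

theorem sum_ite_zero_top {ι : Type*} [Fintype ι] (P : ι → Prop) [DecidablePred P] :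
    ∑ i, (if P i then (0 : EReal) else ⊤) = if ∀ i, P i then 0 else ⊤ := by
  split_ifs with hP
  · exact Finset.sum_eq_zero fun i _ => if_pos (hP i)
  · obtain ⟨i, hi⟩ := not_forall.mp hP
    refine top_le_iff.mp ?_
    calc (⊤ : EReal) = if P i then 0 else ⊤ := (if_neg hi).symm
      _ ≤ ∑ i, (if P i then (0 : EReal) else ⊤) :=
        Finset.single_le_sum (f := fun i => if P i then (0 : EReal) else ⊤)
          (fun j _ => by split_ifs <;> simp) (Finset.mem_univ i)

theorem complementarity_implies_minimizer_general (μ : ℝ) (hμ : 0 < μ)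
    (d c : ℕ) (K : Matrix (Fin d) (Fin d) ℝ) (hpd : K.PosDef)
    (p : Fin d → ℝ) (gt : Fin c → ℝ) (tn : Fin c → Fin d → ℝ)
    (Tt : Fin c → Matrix (Fin d) (Fin 2) ℝ)
    (Δu : Fin d → ℝ) (rn : Fin c → ℝ) (rt : Fin c → E2)
    (vec : Fin c → (Fin d → ℝ) → V)
    (hvec : ∀ j u, vec j u = pr (-gt j + tn j ⬝ᵥ u) (WithLp.toLp 2 ((Tt j)ᵀ.mulVec u)))
    (J : (Fin d → ℝ) → EReal)
    (hJ : ∀ u, J u = (((1 / 2) * (K.mulVec u ⬝ᵥ u) - p ⬝ᵥ u : ℝ) : EReal)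
        + ∑ j, (if vec j u ∈ frictionDual μ then (0 : EReal) else ⊤))
    (heq : K.mulVec Δu - p = ∑ j, (rn j • tn j + (Tt j).mulVec (rt j)))
    (hcomp : ∀ j, vec j Δu ∈ frictionDual μ ∧
        pr (rn j) (rt j) ∈ frictionCone μ ∧
        ⟪pr (rn j) (rt j), vec j Δu⟫ = 0) :
    ∀ u, J Δu ≤ J u := by
  intro u
  rw [hJ, hJ, sum_ite_zero_top, sum_ite_zero_top, if_pos fun j => (hcomp j).1, add_zero]
  split_ifs with hu
  · rw [add_zero, EReal.coe_le_coe_iff]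
    refine quadratic_le_of_dotProduct_sub_nonneg hpd.posSemidef p ?_
    have hpairing : ∀ j, ⟪pr (rn j) (rt j), vec j u⟫
        = (rn j • tn j + (Tt j) *ᵥ rt j) ⬝ᵥ (u - Δu) := fun j => by
      rw [← inner_pr_affine_sub _ (gt j), ← hvec, ← hvec, (hcomp j).2.2, sub_zero]
    rw [heq, sum_dotProduct]
    exact Finset.sum_nonneg fun j _ =>
      hpairing j ▸ frictionCone_subset_dualCone_frictionDual hμ (hcomp j).2.1 _ (hu j)
  · rw [EReal.coe_add_top]
    exact le_top

theorem complementarity_implies_minimizer (μ : ℝ) (hμ : 0 < μ)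
    (d c : ℕ) (K : Matrix (Fin d) (Fin d) ℝ) (hsym : K.IsSymm) (hpd : K.PosDef)
    (p : Fin d → ℝ) (gt : Fin c → ℝ) (tn : Fin c → Fin d → ℝ)
    (Tt : Fin c → Matrix (Fin d) (Fin 2) ℝ)
    (Δu : Fin d → ℝ) (rn : Fin c → ℝ) (rt : Fin c → E2)
    (vec : Fin c → (Fin d → ℝ) → V)
    (hvec : ∀ j u, vec j u = pr (-gt j + tn j ⬝ᵥ u) (WithLp.toLp 2 ((Tt j)ᵀ.mulVec u)))
    (J : (Fin d → ℝ) → EReal)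
    (hJ : ∀ u, J u = (((1 / 2) * (K.mulVec u ⬝ᵥ u) - p ⬝ᵥ u : ℝ) : EReal)
        + ∑ j, (if vec j u ∈ frictionDual μ then (0 : EReal) else ⊤))
    (heq : K.mulVec Δu - p = ∑ j, (rn j • tn j + (Tt j).mulVec (rt j)))
    (hcomp : ∀ j, vec j Δu ∈ frictionDual μ ∧
        pr (rn j) (rt j) ∈ frictionCone μ ∧
        ⟪pr (rn j) (rt j), vec j Δu⟫ = 0) :
    ∀ u, J Δu ≤ J u :=
  complementarity_implies_minimizer_general μ hμ d c K hpd p gt tn Tt Δu rn rt vec hvec J hJ heq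
    hcomp
end
end

section
/- Let μ > 0 and let r = (r_n, r_t) ∈ F and v = (v_n, v_t) ∈ F* with ⟨r, v⟩ = 0, r ≠ 0 and v ≠ 0. Then -μ r_n = ‖r_t‖ > 0, -v_n = μ‖v_t‖ > 0, and there exists α > 0 such that v_t = -α r_t. -/
open scoped RealInnerProductSpace Pointwise Classical Matrix

noncomputable section

section ComplementaryPair

variable {F : Type*} [NormedAddCommGroup F] [InnerProductSpace ℝ F]

theorem eq_neg_smul_of_inner_eq_neg_norm_mul {x y : F} (hx : x ≠ 0)
    (h : ⟪x, y⟫ = -(‖x‖ * ‖y‖)) : y = -(‖y‖ / ‖x‖) • x := by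
  have hxy : ‖y‖ • -x = ‖x‖ • y := by
    rw [← norm_neg x]
    exact inner_eq_norm_mul_iff_real.1 (by rw [inner_neg_left, norm_neg, h, neg_neg])
  calc y = ‖x‖⁻¹ • ‖x‖ • y := (inv_smul_smul₀ (norm_ne_zero_iff.2 hx) y).symm
    _ = -(‖y‖ / ‖x‖) • x := by rw [← hxy, smul_smul, smul_neg, ← neg_smul, inv_mul_eq_div]

/-- Every inequality in `0 = a b + ⟪x, y⟫ ≥ a b - ‖x‖ ‖y‖ ≥ a b - (-μ a) (-b / μ) = 0` is tight. -/
theorem complementary_equalities {μ a b : ℝ} {x y : F} (hμ : 0 < μ) (ha : a < 0)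
    (hb : b < 0) (hx : ‖x‖ ≤ -μ * a) (hy : μ * ‖y‖ ≤ -b) (h : a * b + ⟪x, y⟫ = 0) :
    (-μ * a = ‖x‖ ∧ 0 < ‖x‖) ∧ (-b = μ * ‖y‖ ∧ 0 < ‖y‖) ∧ ⟪x, y⟫ = -(‖x‖ * ‖y‖) := by
  have hcs : a * b ≤ ‖x‖ * ‖y‖ := by
    linarith [(abs_le.1 (abs_real_inner_le_norm x y)).1]
  have hpos : 0 < ‖x‖ * ‖y‖ := (mul_pos_of_neg_of_neg ha hb).trans_le hcs
  have hx0 : 0 < ‖x‖ := pos_of_mul_pos_left hpos (norm_nonneg y)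
  have hy0 : 0 < ‖y‖ := pos_of_mul_pos_right hpos (norm_nonneg x)
  have hprod : ‖x‖ * (μ * ‖y‖) = -μ * a * -b :=
    le_antisymm (mul_le_mul hx hy (by positivity) (by linarith)) (by nlinarith)
  obtain ⟨hxa, hyb⟩ := (mul_eq_mul_iff_eq_and_eq_of_pos hx hy hx0 (neg_pos.2 hb)).1 hprod
  refine ⟨⟨hxa.symm, hx0⟩, ⟨hyb.symm, hy0⟩, ?_⟩
  nlinarith

end ComplementaryPair

theorem ofLp_fst_neg_of_mem_frictionCone {μ : ℝ} (hμ : 0 < μ) {r : V}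
    (hr : r ∈ frictionCone μ) (hr0 : r ≠ 0) : r.ofLp.1 < 0 := by
  have hr' : ‖r.ofLp.2‖ ≤ -μ * r.ofLp.1 := hr
  by_contra! h
  have h2 : r.ofLp.2 = 0 := norm_le_zero_iff.1 (hr'.trans (by nlinarith))
  have h1 : r.ofLp.1 = 0 := by nlinarith [norm_nonneg r.ofLp.2]
  exact hr0 ((WithLp.ofLp_eq_zero 2).1 (Prod.ext h1 h2))

theorem ofLp_fst_neg_of_mem_frictionDual {μ : ℝ} (hμ : 0 < μ) {v : V}
    (hv : v ∈ frictionDual μ) (hv0 : v ≠ 0) : v.ofLp.1 < 0 := by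
  have hv' : μ * ‖v.ofLp.2‖ ≤ -v.ofLp.1 := hv
  by_contra! h
  have h2 : v.ofLp.2 = 0 := norm_le_zero_iff.1 (by nlinarith)
  have h1 : v.ofLp.1 = 0 := by nlinarith [norm_nonneg v.ofLp.2]
  exact hv0 ((WithLp.ofLp_eq_zero 2).1 (Prod.ext h1 h2))

theorem inner_eq_fst_mul_add_inner_snd (r v : V) :
    ⟪r, v⟫ = r.ofLp.1 * v.ofLp.1 + ⟪r.ofLp.2, v.ofLp.2⟫ := by
  rw [WithLp.prod_inner_apply, real_inner_eq_re_inner, RCLike.inner_apply, mul_comm]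
  rfl

theorem nonzero_complementary_pair (μ : ℝ) (hμ : 0 < μ)
    (r v : V) (hr : r ∈ frictionCone μ) (hv : v ∈ frictionDual μ)
    (hperp : ⟪r, v⟫ = 0) (hr0 : r ≠ 0) (hv0 : v ≠ 0) :
    (-μ * r.ofLp.1 = ‖r.ofLp.2‖ ∧ 0 < ‖r.ofLp.2‖) ∧ (-v.ofLp.1 = μ * ‖v.ofLp.2‖ ∧ 0 < ‖v.ofLp.2‖) ∧
      ∃ α : ℝ, 0 < α ∧ v.ofLp.2 = -α • r.ofLp.2 := by
  obtain ⟨hrn, hvn, hinner⟩ := complementary_equalities hμ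
    (ofLp_fst_neg_of_mem_frictionCone hμ hr hr0) (ofLp_fst_neg_of_mem_frictionDual hμ hv hv0)
    hr hv ((inner_eq_fst_mul_add_inner_snd r v).symm.trans hperp)
  refine ⟨hrn, hvn, ‖v.ofLp.2‖ / ‖r.ofLp.2‖, div_pos hvn.2 hrn.2, ?_⟩
  exact eq_neg_smul_of_inner_eq_neg_norm_mul (norm_pos_iff.1 hrn.2) hinner
end
end
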